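/- Let X be a compact connected metric space, M > 1 a real number, n₀ a positive integer with 4·M^{-n₀} < diam X / 4, and let X_{n₀} be a maximal M^{-n₀}-net in X. Then there exist an isometric embedding ι : X → ℓ^∞ and a compact connected set Γ ⊆ ℓ^∞ that is a finite union of line segments with ι(X_{n₀}) ⊆ Γ, such that for every x ∈ X_{n₀} and every r ∈ (4M^{-n₀}, diam X / 4): H¹(Γ ∩ B(ι(x), r/2)) ≤ 8·M^{-n₀}·#{y ∈ X_{n₀} : d(x,y) < r}. -/

import Mathlib

open Metric Set MeasureTheory

noncomputable section

/-- `ℓ^∞`, the Banach space of bounded real sequences with the sup norm. -/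
abbrev lInf : Type := lp (fun _ : ℕ => ℝ) ⊤

instance : MeasurableSpace lInf := borel lInf
instance : BorelSpace lInf := ⟨rfl⟩

/-! Write `δ = M^{-n₀}`. The `δ`-separated set `N` is finite by compactness, and because `X` is
connected and `N` is a `δ`-net, the graph on `N` joining points at distance `≤ 2δ` is connected.
Orient a spanning tree of it towards a root and realise each edge `y — parent y` as a segment
between the Kuratowski images in `ℓ^∞`; their union is `Γ`. An edge meeting `B(ι x, r/2)` has
length `≤ 2δ < r/2`, so its child endpoint `y` satisfies `d(x, y) < r`, and distinct edges have
distinct children. Hence `H¹(Γ ∩ B(ι x, r/2)) ≤ 2δ · #{y ∈ N : d(x, y) < r}`. -/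

lemma finite_of_forall_le_dist {X : Type*} [MetricSpace X] [CompactSpace X] {δ : ℝ} (hδ : 0 < δ)
    {N : Set X} (hN : ∀ x ∈ N, ∀ y ∈ N, x ≠ y → δ ≤ dist x y) : N.Finite := by
  lift δ to NNReal using hδ.le
  obtain ⟨C, -, hCfin, hC⟩ := exists_finite_isCover_of_isCompact (ε := δ / 4)
    (by have := NNReal.coe_pos.1 hδ; positivity) (isCompact_univ (X := X))
  have hsep : IsSeparated ((2 * (δ / 4) : NNReal) : ENNReal) N := fun x hx y hy hxy => by
    show _ < edist x y
    rw [edist_dist, ← ENNReal.ofReal_coe_nnreal]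
    refine (ENNReal.ofReal_lt_ofReal_iff (dist_pos.2 hxy)).2 ?_
    push_cast
    linarith [hN x hx y hy hxy]
  refine Set.finite_of_encard_le_coe (k := hCfin.toFinset.card) ?_
  calc N.encard ≤ packingNumber (2 * (δ / 4)) univ := hsep.encard_le_packingNumber (subset_univ N)
    _ ≤ externalCoveringNumber (δ / 4) univ := packingNumber_two_mul_le_externalCoveringNumber _ _
    _ ≤ C.encard := hC.externalCoveringNumber_le_encard
    _ = _ := hCfin.encard_eq_coe_toFinset_card

def proximityGraph (X : Type*) [PseudoMetricSpace X] (ε : ℝ) : SimpleGraph X where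
  Adj x y := x ≠ y ∧ dist x y ≤ ε
  symm := ⟨fun x y h => ⟨h.1.symm, by rw [dist_comm]; exact h.2⟩⟩
  loopless := ⟨fun _ h => h.1 rfl⟩

lemma proximityGraph_reachable_of_dist_le {X : Type*} [PseudoMetricSpace X] {ε : ℝ} {x y : X}
    (h : dist x y ≤ ε) : (proximityGraph X ε).Reachable x y := by
  by_cases hxy : x = y
  · exact hxy ▸ SimpleGraph.Reachable.refl x
  · exact SimpleGraph.Adj.reachable ⟨hxy, h⟩

/-- Two reachability classes give disjoint closed `δ`-neighbourhoods, which together cover the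
space because `N` is a `δ`-net; connectedness of the space leaves room for only one class. -/
lemma proximityGraph_connected_of_net {X : Type*} [MetricSpace X] [ConnectedSpace X]
    {N : Set X} (hN : N.Finite) {δ : ℝ} (hnet : ∀ x, ∃ y ∈ N, dist x y ≤ δ) :
    (proximityGraph N (2 * δ)).Connected := by
  have : Finite N := hN.to_subtype
  obtain ⟨x₀⟩ := ‹ConnectedSpace X›.toNonempty
  obtain ⟨y₀, hy₀, hx₀y₀⟩ := hnet x₀
  have hδ : 0 ≤ δ := dist_nonneg.trans hx₀y₀
  have : Nonempty N := ⟨⟨y₀, hy₀⟩⟩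
  refine ⟨fun a b => ?_⟩
  by_contra hab
  set R : Set N := {c | (proximityGraph N (2 * δ)).Reachable a c}
  set U : Set X := ⋃ c ∈ R, closedBall (c : X) δ
  set V : Set X := ⋃ c ∈ Rᶜ, closedBall (c : X) δ
  have hU : IsClosed U := R.toFinite.isClosed_biUnion fun _ _ => isClosed_closedBall
  have hV : IsClosed V := Rᶜ.toFinite.isClosed_biUnion fun _ _ => isClosed_closedBall
  have hcover : U ∪ V = univ := by
    refine eq_univ_of_forall fun x => ?_
    obtain ⟨y, hy, hxy⟩ := hnet x
    by_cases hR : (⟨y, hy⟩ : N) ∈ R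
    · exact Or.inl (mem_biUnion hR (mem_closedBall.2 hxy))
    · exact Or.inr (mem_biUnion hR (mem_closedBall.2 hxy))
  have hdisj : Disjoint U V := by
    refine Set.disjoint_left.2 fun z hzU hzV => ?_
    obtain ⟨c, hc, hzc⟩ := mem_iUnion₂.1 hzU
    obtain ⟨c', hc', hzc'⟩ := mem_iUnion₂.1 hzV
    refine hc' (hc.trans (proximityGraph_reachable_of_dist_le ?_))
    calc dist c c' = dist (c : X) c' := rfl
      _ ≤ dist (c : X) z + dist z c' := dist_triangle _ _ _
      _ ≤ 2 * δ := by linarith [mem_closedBall'.1 hzc, mem_closedBall.1 hzc']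
  have hUclopen : IsClopen U :=
    ⟨hU, (isCompl_iff.2 ⟨hdisj, codisjoint_iff.2 hcover⟩).eq_compl ▸ hV.isOpen_compl⟩
  have haU : (a : X) ∈ U := mem_biUnion (SimpleGraph.Reachable.refl a) (mem_closedBall_self hδ)
  have hbV : (b : X) ∈ V := mem_biUnion hab (mem_closedBall_self hδ)
  exact Set.disjoint_left.1 hdisj (hUclopen.eq_univ ⟨a, haU⟩ ▸ mem_univ _) hbV

namespace SimpleGraph

lemma Reachable.exists_adj_dist_lt {V : Type*} {G : SimpleGraph V} {u v : V} (h : G.Reachable u v)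
    (hne : u ≠ v) : ∃ w, G.Adj u w ∧ G.dist w v < G.dist u v := by
  obtain ⟨p, hp⟩ := h.exists_walk_length_eq_dist
  have hnil : ¬p.Nil := fun hn => hne hn.eq
  refine ⟨p.snd, p.adj_snd hnil, ?_⟩
  calc G.dist p.snd v ≤ p.tail.length := dist_le _
    _ < p.length := by rw [← p.length_tail_add_one hnil]; omega
    _ = G.dist u v := hp

lemma Connected.exists_parent_map {V : Type*} {G : SimpleGraph V} (hG : G.Connected) :
    ∃ (root : V) (par : V → V), par root = root ∧
      ∀ v ≠ root, G.Adj v (par v) ∧ G.dist (par v) root < G.dist v root := by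
  classical
  obtain ⟨root⟩ := hG.nonempty
  have hpar : ∀ v, ∃ w, v ≠ root → G.Adj v w ∧ G.dist w root < G.dist v root := fun v =>
    if hv : v = root then ⟨root, fun h => (h hv).elim⟩
    else (hG v root).exists_adj_dist_lt hv |>.imp fun _ hw _ => hw
  choose par hpar using hpar
  refine ⟨root, Function.update par root root, by simp, fun v hv => ?_⟩
  simpa [Function.update_of_ne hv] using hpar v hv

end SimpleGraph

section Segments

variable {E : Type*} [NormedAddCommGroup E] [NormedSpace ℝ E]

lemma isCompact_segment (x y : E) : IsCompact (segment ℝ x y) := by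
  rw [segment_eq_image]
  exact isCompact_Icc.image (by fun_prop)

lemma isConnected_iUnion_segment_of_parent {ι : Type*} [Nonempty ι] (f : ι → E) (par : ι → ι)
    (rank : ι → ℕ) (root : ι) (hpar : ∀ i ≠ root, rank (par i) < rank i) :
    IsConnected (⋃ i, segment ℝ (f i) (f (par i))) := by
  set s : ι → Set E := fun i => segment ℝ (f i) (f (par i))
  set R : ι → ι → Prop := fun i j => (s i ∩ s j).Nonempty
  have hR : ∀ i, Relation.ReflTransGen R i root := by
    intro i
    induction hi : rank i using Nat.strong_induction_on generalizing i with
    | _ n ih =>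
      by_cases hroot : i = root
      · exact hroot ▸ Relation.ReflTransGen.refl
      · exact .head ⟨f (par i), right_mem_segment ℝ _ _, left_mem_segment ℝ _ _⟩
          (ih _ (hi ▸ hpar i hroot) _ rfl)
  refine IsConnected.iUnion_of_reflTransGen
    (fun i => (convex_segment _ _).isConnected ⟨f i, left_mem_segment ℝ _ _⟩)
    fun i j => (hR i).trans (Relation.ReflTransGen.mono
      (fun _ _ h => h.mono (inter_comm _ _).subset) _ _ (Relation.reflTransGen_swap.2 (hR j)))

lemma dist_lt_add_of_segment_inter_ball {x y c : E} {ρ : ℝ}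
    (h : (segment ℝ x y ∩ ball c ρ).Nonempty) : dist x c < dist x y + ρ := by
  obtain ⟨z, hzseg, hzball⟩ := h
  calc dist x c ≤ dist x z + dist z c := dist_triangle _ _ _
    _ < dist x y + ρ := by
      have := dist_add_dist_of_mem_segment hzseg
      linarith [dist_nonneg (x := z) (y := y), mem_ball.1 hzball]

variable [MeasurableSpace E] [BorelSpace E]

lemma hausdorffMeasure_iUnion_segment_inter_le {ι : Type*} [Finite ι] (p q : ι → E) (s : Set E)
    {L : ℝ} (hL : ∀ i, (segment ℝ (p i) (q i) ∩ s).Nonempty → dist (p i) (q i) ≤ L) :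
    μH[1] ((⋃ i, segment ℝ (p i) (q i)) ∩ s) ≤
      ENNReal.ofReal ({i | (segment ℝ (p i) (q i) ∩ s).Nonempty}.ncard * L) := by
  classical
  have := Fintype.ofFinite ι
  set T := Finset.univ.filter fun i => (segment ℝ (p i) (q i) ∩ s).Nonempty
  calc μH[1] ((⋃ i, segment ℝ (p i) (q i)) ∩ s)
      ≤ ∑ i, μH[1] (segment ℝ (p i) (q i) ∩ s) := by
        rw [iUnion_inter]; exact measure_iUnion_fintype_le _ _
    _ = ∑ i ∈ T, μH[1] (segment ℝ (p i) (q i) ∩ s) := by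
        refine (Finset.sum_filter_of_ne fun i _ hi => ?_).symm
        exact nonempty_iff_ne_empty.2 fun h => hi (by rw [h, measure_empty])
    _ ≤ T.card • ENNReal.ofReal L := by
        refine Finset.sum_le_card_nsmul _ _ _ fun i hi => ?_
        calc μH[1] (segment ℝ (p i) (q i) ∩ s) ≤ μH[1] (segment ℝ (p i) (q i)) :=
              measure_mono inter_subset_left
          _ = ENNReal.ofReal (dist (p i) (q i)) := by rw [hausdorffMeasure_segment, edist_dist]
          _ ≤ ENNReal.ofReal L := ENNReal.ofReal_le_ofReal (hL i (Finset.mem_filter.1 hi).2)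
    _ = _ := by
        rw [nsmul_eq_mul, ← ENNReal.ofReal_natCast, ← ENNReal.ofReal_mul (Nat.cast_nonneg _),
          Set.ncard_eq_toFinset_card', Set.toFinset_ofPred]

/-- A segment of length `≤ L ≤ r / 2` meeting `B(ι x, r / 2)` starts at some `y ∈ N` with
`d(x, y) < r`, and distinct segments have distinct starting points. -/
lemma hausdorffMeasure_iUnion_segment_inter_ball_le {X : Type*} [MetricSpace X] {N : Set X}
    (hN : N.Finite) {ι : X → E} (hι : Isometry ι) (par : N → N) {L : ℝ}
    (hpar : ∀ i : N, dist (i : X) (par i : X) ≤ L) (x : X) {r : ℝ} (hLr : L ≤ r / 2) :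
    μH[1] ((⋃ i : N, segment ℝ (ι i) (ι (par i))) ∩ ball (ι x) (r / 2)) ≤
      ENNReal.ofReal ({y ∈ N | dist x y < r}.ncard * L) := by
  have : Finite N := hN.to_subtype
  have hL : ∀ i : N, dist (ι i) (ι (par i)) ≤ L := fun i => (hι.dist_eq _ _).trans_le (hpar i)
  have hcount : {i : N | (segment ℝ (ι i) (ι (par i)) ∩ ball (ι x) (r / 2)).Nonempty}.ncard ≤
      {y ∈ N | dist x y < r}.ncard := by
    refine ncard_le_ncard_of_injOn Subtype.val (fun i hi => ⟨i.2, ?_⟩) Subtype.val_injective.injOn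
      (hN.subset (sep_subset _ _))
    have := dist_lt_add_of_segment_inter_ball hi
    rw [hι.dist_eq, dist_comm] at this
    linarith [hL i]
  refine (hausdorffMeasure_iUnion_segment_inter_le _ _ _ fun i _ => hL i).trans ?_
  rcases le_or_gt 0 L with hL0 | hL0
  · gcongr
  · rw [ENNReal.ofReal_of_nonpos (mul_nonpos_of_nonneg_of_nonpos (Nat.cast_nonneg _) hL0.le)]
    exact zero_le

end Segments

/-- **Lemma (approximating tree).** Let `X` be a compact connected metric space, `M > 1`,
`n₀ ≥ 1` with `4·M^{-n₀} < diam X / 4`, and let `N` be a maximal `M^{-n₀}`-net in `X`. Then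
`X` embeds isometrically into `ℓ^∞` by a map `ι` such that there is a compact connected set
`Γ ⊆ ℓ^∞`, a finite union of line segments, containing `ι(N)`, with
`H¹(Γ ∩ B(ι x, r/2)) ≤ 8·M^{-n₀}·#{y ∈ N : d(x,y) < r}` for all `x ∈ N` and
`r ∈ (4M^{-n₀}, diam X / 4)`. -/
theorem approximating_tree_exists :
    ∀ (X : Type*) [MetricSpace X], CompactSpace X → ConnectedSpace X →
      ∀ M : ℝ, 1 < M → ∀ n₀ : ℕ, 0 < n₀ →
        4 * M ^ (-(n₀ : ℤ)) < Metric.diam (Set.univ : Set X) / 4 →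
        ∀ N : Set X,
          (∀ x ∈ N, ∀ y ∈ N, x ≠ y → M ^ (-(n₀ : ℤ)) ≤ dist x y) →
          (∀ x : X, ∃ y ∈ N, dist x y ≤ M ^ (-(n₀ : ℤ))) →
          ∃ ι : X → lInf, Isometry ι ∧
            ∃ Γ : Set lInf, IsCompact Γ ∧ IsConnected Γ ∧
              (∃ (k : ℕ) (p q : Fin k → lInf), Γ = ⋃ i, segment ℝ (p i) (q i)) ∧
              ι '' N ⊆ Γ ∧
              ∀ x ∈ N, ∀ r : ℝ, 4 * M ^ (-(n₀ : ℤ)) < r →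
                r < Metric.diam (Set.univ : Set X) / 4 →
                μH[1] (Γ ∩ Metric.ball (ι x) (r / 2)) ≤
                  ENNReal.ofReal (8 * M ^ (-(n₀ : ℤ)) * ({y ∈ N | dist x y < r}).ncard) := by
  intro X _ _ _ M hM n₀ _ _ N hsep hnet
  set δ : ℝ := M ^ (-(n₀ : ℤ))
  have hδ : 0 < δ := zpow_pos (by linarith) _
  have hN : N.Finite := finite_of_forall_le_dist hδ hsep
  have : Finite N := hN.to_subtype
  obtain ⟨root, par, hpar_root, hpar⟩ :=
    (proximityGraph_connected_of_net hN hnet).exists_parent_map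
  have : Nonempty N := ⟨root⟩
  have hpar_dist : ∀ i : N, dist (i : X) (par i : X) ≤ 2 * δ := fun i => by
    rcases eq_or_ne i root with rfl | hi
    · rw [hpar_root, dist_self]; positivity
    · exact (hpar i hi).1.2
  set ι := kuratowskiEmbedding X
  refine ⟨ι, kuratowskiEmbedding.isometry X, ⋃ i : N, segment ℝ (ι i) (ι (par i)),
    isCompact_iUnion fun _ => isCompact_segment _ _, ?_, ?_, ?_, fun x _ r hr _ => ?_⟩
  · exact isConnected_iUnion_segment_of_parent (fun i : N => ι i) par
      (fun i => (proximityGraph N (2 * δ)).dist i root) root fun i hi => (hpar i hi).2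
  · have e := (Finite.equivFin N).symm
    exact ⟨_, fun k => ι (e k), fun k => ι (par (e k)),
      (e.surjective.iUnion_comp fun i => segment ℝ (ι i) (ι (par i))).symm⟩
  · rintro _ ⟨y, hy, rfl⟩
    exact mem_iUnion.2 ⟨⟨y, hy⟩, left_mem_segment ℝ _ _⟩
  calc _ ≤ ENNReal.ofReal ({y ∈ N | dist x y < r}.ncard * (2 * δ)) :=
        hausdorffMeasure_iUnion_segment_inter_ball_le hN (kuratowskiEmbedding.isometry X) par
          hpar_dist x (by linarith)
    _ ≤ _ := ENNReal.ofReal_le_ofReal (by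
        nlinarith [Nat.cast_nonneg (α := ℝ) {y ∈ N | dist x y < r}.ncard])
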